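/- If G and H have no central factors, then the restricted wreath product H ≀ G has no central factors. -/

import Mathlib

open Function

/-- The subgroup of finitely supported functions `B → H`, the base of the
restricted wreath product `H ≀ B`. -/
def restrictedPi (H B : Type*) [Group H] [Group B] : Subgroup (B → H) where
  carrier := {f | (mulSupport f).Finite}
  one_mem' := by simp
  mul_mem' {a b} ha hb := (ha.union hb).subset (mulSupport_mul a b)
  inv_mem' {a} ha := by simpa using ha

/-- The shift action of `b : B` on functions `B → H`. -/
def shiftEquiv (H B : Type*) [Group H] [Group B] (b : B) : (B → H) ≃* (B → H) where
  toFun f := fun x => f (b⁻¹ * x)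
  invFun f := fun x => f (b * x)
  left_inv f := by funext x; simp [← mul_assoc]
  right_inv f := by funext x; simp [← mul_assoc]
  map_mul' f g := rfl

lemma shiftEquiv_mem {H B : Type*} [Group H] [Group B] (b : B) (f : B → H)
    (hf : f ∈ restrictedPi H B) : shiftEquiv H B b f ∈ restrictedPi H B := by
  have h : mulSupport (shiftEquiv H B b f) ⊆ (fun x => b * x) '' mulSupport f := by
    intro x hx
    exact ⟨b⁻¹ * x, hx, by simp⟩
  exact Set.Finite.subset (Set.Finite.image _ hf) h

/-- The shift action of `B` on the finitely supported functions `B → H`. -/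
def shiftAut (H B : Type*) [Group H] [Group B] : B →* MulAut (restrictedPi H B) where
  toFun b :=
    { toFun := fun f => ⟨shiftEquiv H B b f, shiftEquiv_mem (H := H) (B := B) b f f.2⟩
      invFun := fun f => ⟨shiftEquiv H B b⁻¹ f, shiftEquiv_mem (H := H) (B := B) b⁻¹ f f.2⟩
      left_inv := fun f => by
        ext x
        simp [shiftEquiv, ← mul_assoc]
      right_inv := fun f => by
        ext x
        simp [shiftEquiv, ← mul_assoc]
      map_mul' := fun f g => rfl }
  map_one' := by
    ext f x
    simp [shiftEquiv]
  map_mul' a b := by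
    ext f x
    simp [shiftEquiv, mul_assoc]

/-- The restricted wreath product `H ≀ B`. -/
abbrev RestrictedWreath (H B : Type*) [Group H] [Group B] :=
  SemidirectProduct (restrictedPi H B) B (shiftAut H B)

/-- `K` has no central factors: whenever `L ≤ M` are normal subgroups of `K` with
`M/L` central in `K/L` (equivalently `⁅M, K⁆ ≤ L`), we have `M = L`. -/
def NoCentralFactors (K : Type*) [Group K] : Prop :=
  ∀ L M : Subgroup K, L.Normal → M.Normal → L ≤ M →
    ⁅M, (⊤ : Subgroup K)⁆ ≤ L → M = L

/-!
A central factor `M/L` of `H ≀ G` maps to a central factor of `G`, so `M` and `L` have the same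
image in `G` and it suffices to show that `M` and `L` meet the base group in the same subgroup.
For a coordinate `x`, the projection to coordinate `x` of `M ∩ base` and the pullback of `L`
along the embedding of `H` at `x` form a central factor of `H`, so they coincide: every coordinate
of an element of `M ∩ base` lies in `L`, and a finitely supported function is the product of its
coordinates.
-/

open SemidirectProduct
open scoped commutatorElement

section Quotient

variable {K Q : Type*} [Group K] [Group Q]

lemma NoCentralFactors.map_eq_map {φ : K →* Q} (hQ : NoCentralFactors Q)
    (hφ : Surjective φ) {L M : Subgroup K} (hL : L.Normal) (hM : M.Normal) (hLM : L ≤ M)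
    (hML : ⁅M, (⊤ : Subgroup K)⁆ ≤ L) : M.map φ = L.map φ := by
  refine hQ _ _ (hL.map φ hφ) (hM.map φ hφ) (Subgroup.map_mono hLM) ?_
  rw [← Subgroup.map_top_of_surjective φ hφ, ← Subgroup.map_commutator]
  exact Subgroup.map_mono hML

lemma Subgroup.le_of_map_le_of_inf_ker_le {φ : K →* Q} {L M : Subgroup K} (hLM : L ≤ M)
    (hmap : M.map φ ≤ L.map φ) (hker : M ⊓ φ.ker ≤ L) : M ≤ L := by
  intro m hm
  obtain ⟨l, hl, hlm⟩ := hmap ⟨m, hm, rfl⟩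
  have : l⁻¹ * m ∈ L :=
    hker ⟨M.mul_mem (M.inv_mem (hLM hl)) hm, by simp [hlm]⟩
  simpa using L.mul_mem hl this

end Quotient

namespace restrictedPi

variable {H G : Type*} [Group H] [Group G]

lemma mulSingle_mem [DecidableEq G] (x : G) (h : H) : Pi.mulSingle x h ∈ restrictedPi H G :=
  (Set.finite_singleton x).subset Pi.mulSupport_mulSingle_subset

def mulSingle [DecidableEq G] (x : G) : H →* restrictedPi H G :=
  (MonoidHom.mulSingle (fun _ : G => H) x).codRestrict _ (mulSingle_mem x)

def eval (x : G) : restrictedPi H G →* H :=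
  (Pi.evalMonoidHom _ x).comp (restrictedPi H G).subtype

@[simp]
lemma coe_mulSingle [DecidableEq G] (x : G) (h : H) :
    (mulSingle x h : G → H) = Pi.mulSingle x h := rfl

@[simp]
lemma eval_apply (x : G) (f : restrictedPi H G) : eval x f = (f : G → H) x := rfl

@[simp]
lemma eval_mulSingle [DecidableEq G] (x : G) (h : H) : eval x (mulSingle x h) = h := by
  simp

lemma mulSingle_commutatorElement [DecidableEq G] (x : G) (f : restrictedPi H G) (h : H) :
    mulSingle x ⁅eval x f, h⁆ = ⁅f, mulSingle x h⁆ := by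
  ext y
  by_cases hy : y = x
  · subst hy
    simp [commutatorElement_def]
  · simp [commutatorElement_def, hy]

lemma mem_of_mulSingle_mem [DecidableEq G] {S : Subgroup (restrictedPi H G)}
    (f : restrictedPi H G) (hf : ∀ x, mulSingle x ((f : G → H) x) ∈ S) : f ∈ S := by
  obtain ⟨g, hg, hgf⟩ : (f : G → H) ∈ S.map (restrictedPi H G).subtype :=
    Submonoid.pi_mem_of_mulSingle_mem_aux f.2.toFinset _
      (fun x hx => notMem_mulSupport.mp (mt f.2.mem_toFinset.mpr hx)) (fun x _ => ⟨_, hf x, rfl⟩)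
  exact Subtype.ext hgf ▸ hg

variable {K : Type*} [Group K] (φ : restrictedPi H G →* K) {L M : Subgroup K}

lemma mulSingle_apply_mem_of_noCentralFactors [DecidableEq G] (hH : NoCentralFactors H)
    (hL : L.Normal) (hM : M.Normal) (hLM : L ≤ M) (hML : ⁅M, (⊤ : Subgroup K)⁆ ≤ L)
    {f : restrictedPi H G} (hf : φ f ∈ M) (x : G) : φ (mulSingle x ((f : G → H) x)) ∈ L := by
  let A : Subgroup H := (M.comap φ).map (eval x)
  let L' : Subgroup H := L.comap (φ.comp (mulSingle x))
  have hA : A.Normal := by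
    constructor
    rintro _ ⟨e, he, rfl⟩ h
    refine ⟨mulSingle x h * e * (mulSingle x h)⁻¹, ?_, by simp⟩
    simpa using hM.conj_mem _ he (φ (mulSingle x h))
  have hL'A : L' ≤ A := fun l hl => ⟨mulSingle x l, hLM hl, eval_mulSingle x l⟩
  have hAL' : ⁅A, (⊤ : Subgroup H)⁆ ≤ L' := by
    rw [Subgroup.commutator_le]
    rintro _ ⟨e, he, rfl⟩ h -
    change φ (mulSingle x ⁅eval x e, h⁆) ∈ L
    rw [mulSingle_commutatorElement, map_commutatorElement]
    exact hML (Subgroup.commutator_mem_commutator he (Subgroup.mem_top _))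
  have hfx : (f : G → H) x ∈ A := ⟨f, hf, rfl⟩
  exact (hH L' A (hL.comap _) hA hL'A hAL').le hfx

lemma comap_le_comap_of_noCentralFactors (hH : NoCentralFactors H)
    (hL : L.Normal) (hM : M.Normal) (hLM : L ≤ M) (hML : ⁅M, (⊤ : Subgroup K)⁆ ≤ L) :
    M.comap φ ≤ L.comap φ := by
  classical
  exact fun f hf => mem_of_mulSingle_mem f
    (mulSingle_apply_mem_of_noCentralFactors φ hH hL hM hLM hML hf)

end restrictedPi

/-- If `G` and `H` have no central factors, then the restricted wreath product
`H ≀ G` has no central factors. -/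
theorem noCentralFactors_wreath (H G : Type*) [Group H] [Group G]
    (hH : NoCentralFactors H) (hG : NoCentralFactors G) :
    NoCentralFactors (RestrictedWreath H G) := by
  intro L M hL hM hLM hML
  refine le_antisymm (Subgroup.le_of_map_le_of_inf_ker_le hLM
    (hG.map_eq_map rightHom_surjective hL hM hLM hML).le ?_) hLM
  rintro m ⟨hm, hker⟩
  rw [← range_inl_eq_ker_rightHom] at hker
  obtain ⟨f, rfl⟩ := hker
  exact restrictedPi.comap_le_comap_of_noCentralFactors inl hH hL hM hLM hML hm
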